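/- Let H be a real Hilbert space and let A, B ⊆ H be closed affine subspaces with A ∩ B ≠ ∅. Let y ∈ A ∩ B, let α, β ∈ (0, 1), and let z* be any fixed point of T_{A,B,α,β}. Then for every x ∈ H, T_{A,B,α,β}(x) = T_{A−y,B−y,α,β}(x − z*) + z*, and moreover Fix T_{A,B,α,β} = z* + Fix T_{A−y,B−y,α,β}. -/

import Mathlib

open RealInnerProductSpace Pointwise

/-! `T_{A,B,α,β}` is built from projectors onto closed affine subspaces through `y`, each of which
is `y + P_M(· - y)` for the projection `P_M` onto the linear subspace `M` parallel to it. Hence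
`T_{A,B,α,β}` is an affine map whose linear part is `T_{A-y,B-y,α,β}`, so
`T x - T z* = T_{A-y,B-y,α,β} (x - z*)`, and the fixed points of `T` are `z*` plus the fixed
points of its linear part. -/

section AffineAlgebra

variable {H : Type*} [AddCommGroup H]

theorem mem_singleton_add_submodule_iff {R : Type*} [Ring R] [Module R H] (M : Submodule R H)
    {a x : H} : x ∈ ({a} : Set H) + (M : Set H) ↔ x - a ∈ M := by
  rw [Set.singleton_add]
  constructor
  · rintro ⟨m, hm, rfl⟩
    simpa using hm
  · intro hx
    exact ⟨x - a, hx, add_sub_cancel a x⟩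

theorem singleton_add_submodule_eq_of_mem {R : Type*} [Ring R] [Module R H] (M : Submodule R H)
    {a y : H} (hy : y ∈ ({a} : Set H) + (M : Set H)) :
    ({a} : Set H) + (M : Set H) = {y} + (M : Set H) := by
  rw [mem_singleton_add_submodule_iff] at hy
  ext z
  simp only [mem_singleton_add_submodule_iff]
  constructor
  · intro hz
    simpa using M.sub_mem hz hy
  · intro hz
    simpa using M.add_mem hz hy

theorem singleton_add_sub_singleton (S : Set H) (y : H) : ({y} : Set H) + S - {y} = S := by
  rw [Set.singleton_add, Set.sub_singleton, Set.image_image]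
  simp

theorem eq_sub_add_and_fixedPoints_eq_of_sub {T L : H → H} (hTL : ∀ u v, T u - T v = L (u - v))
    {z : H} (hz : T z = z) :
    (∀ x, T x = L (x - z) + z) ∧ {x | T x = x} = (fun s => z + s) '' {x | L x = x} := by
  have hT : ∀ x, T x = L (x - z) + z := fun x => by
    rw [← hTL, hz, sub_add_cancel]
  refine ⟨hT, ?_⟩
  ext x
  simp only [Set.mem_ofPred_eq, Set.mem_image]
  constructor
  · intro hx
    refine ⟨x - z, ?_, add_sub_cancel z x⟩
    rwa [hT, ← eq_sub_iff_add_eq] at hx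
  · rintro ⟨s, hs, rfl⟩
    rw [hT, add_sub_cancel_left, hs, add_comm]

end AffineAlgebra

section Projection

variable {H : Type*} [NormedAddCommGroup H] [InnerProductSpace ℝ H]

theorem Submodule.eq_starProjection_of_forall_norm_sub_le (M : Submodule ℝ H)
    [M.HasOrthogonalProjection] {u v : H} (hv : v ∈ M)
    (hmin : ∀ m ∈ M, ‖u - v‖ ≤ ‖u - m‖) : v = M.starProjection u := by
  have hinf : ‖u - v‖ = ⨅ m : M, ‖u - m‖ :=
    le_antisymm (le_ciInf fun m => hmin m m.2)
      (ciInf_le ⟨0, by rintro r ⟨m, rfl⟩; positivity⟩ (⟨v, hv⟩ : M))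
  exact (M.eq_starProjection_of_mem_of_inner_eq_zero hv
    ((M.norm_eq_iInf_iff_real_inner_eq_zero hv).1 hinf)).symm

theorem Submodule.eq_add_starProjection_of_isNearest (M : Submodule ℝ H)
    [M.HasOrthogonalProjection] {y : H} {P : H → H}
    (hP : ∀ x, P x ∈ ({y} : Set H) + (M : Set H) ∧
      ∀ c ∈ ({y} : Set H) + (M : Set H), ‖x - P x‖ ≤ ‖x - c‖)
    (x : H) : P x = y + M.starProjection (x - y) := by
  obtain ⟨hmem, hmin⟩ := hP x
  rw [mem_singleton_add_submodule_iff] at hmem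
  rw [← M.eq_starProjection_of_forall_norm_sub_le hmem fun m hm => ?_, add_sub_cancel]
  have hle := hmin (y + m) ((mem_singleton_add_submodule_iff M).2 (by simpa using hm))
  rwa [sub_sub_sub_cancel_right, sub_sub]

end Projection

section AAMR

variable {H : Type*} [AddCommGroup H] [Module ℝ H]

def aamr (α β : ℝ) (PA PB : H → H) (x : H) : H :=
  (1 - α) • x + α • ((2 * β) • PB ((2 * β) • PA x - x) - ((2 * β) • PA x - x))

theorem aamr_sub_aamr_of_affine (α β : ℝ) (y : H) (KA KB : H →ₗ[ℝ] H) (u v : H) :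
    aamr α β (fun x => y + KA (x - y)) (fun x => y + KB (x - y)) u
      - aamr α β (fun x => y + KA (x - y)) (fun x => y + KB (x - y)) v
      = aamr α β KA KB (u - v) := by
  simp only [aamr, map_sub, map_add, map_smul, smul_sub, smul_add]
  module

end AAMR

theorem stmt_13_general {H : Type*} [NormedAddCommGroup H] [InnerProductSpace ℝ H] [CompleteSpace H]
    (A B : Set H)
    (MA MB : Submodule ℝ H) (hMA : IsClosed (MA : Set H)) (hMB : IsClosed (MB : Set H))
    (a b : H) (hA : A = {a} + (MA : Set H)) (hB : B = {b} + (MB : Set H))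
    (y : H) (hy : y ∈ A ∩ B)
    (α β : ℝ)
    (PA PB PAy PBy : H → H)
    (hPA : ∀ x, PA x ∈ A ∧ ∀ c ∈ A, ‖x - PA x‖ ≤ ‖x - c‖)
    (hPB : ∀ x, PB x ∈ B ∧ ∀ c ∈ B, ‖x - PB x‖ ≤ ‖x - c‖)
    (hPAy : ∀ x, PAy x ∈ A - {y} ∧ ∀ c ∈ A - {y}, ‖x - PAy x‖ ≤ ‖x - c‖)
    (hPBy : ∀ x, PBy x ∈ B - {y} ∧ ∀ c ∈ B - {y}, ‖x - PBy x‖ ≤ ‖x - c‖)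
    (T Ty : H → H)
    (hT : ∀ x, T x =
      (1 - α) • x + α • ((2 * β) • PB ((2 * β) • PA x - x) - ((2 * β) • PA x - x)))
    (hTy : ∀ x, Ty x =
      (1 - α) • x + α • ((2 * β) • PBy ((2 * β) • PAy x - x) - ((2 * β) • PAy x - x)))
    (zs : H) (hzs : T zs = zs) :
    (∀ x, T x = Ty (x - zs) + zs) ∧
    {x | T x = x} = (fun s => zs + s) '' {x | Ty x = x} := by
  have : CompleteSpace MA := hMA.completeSpace_coe
  have : CompleteSpace MB := hMB.completeSpace_coe
  have hAy : A = {y} + (MA : Set H) := hA.trans (singleton_add_submodule_eq_of_mem MA (hA ▸ hy.1))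
  have hBy : B = {y} + (MB : Set H) := hB.trans (singleton_add_submodule_eq_of_mem MB (hB ▸ hy.2))
  have hPA' : PA = fun x => y + MA.starProjection (x - y) :=
    funext (MA.eq_add_starProjection_of_isNearest (hAy ▸ hPA))
  have hPB' : PB = fun x => y + MB.starProjection (x - y) :=
    funext (MB.eq_add_starProjection_of_isNearest (hBy ▸ hPB))
  rw [hAy, singleton_add_sub_singleton] at hPAy
  rw [hBy, singleton_add_sub_singleton] at hPBy
  have hPAy' : PAy = MA.starProjection :=
    funext fun x => MA.eq_starProjection_of_forall_norm_sub_le (hPAy x).1 (hPAy x).2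
  have hPBy' : PBy = MB.starProjection :=
    funext fun x => MB.eq_starProjection_of_forall_norm_sub_le (hPBy x).1 (hPBy x).2
  have hT' : T = aamr α β PA PB := funext hT
  have hTy' : Ty = aamr α β PAy PBy := funext hTy
  subst hT' hTy' hPA' hPB' hPAy' hPBy'
  exact eq_sub_add_and_fixedPoints_eq_of_sub
    (aamr_sub_aamr_of_affine α β y MA.starProjection.toLinearMap MB.starProjection.toLinearMap) hzs

/-- For closed affine subspaces `A, B` with `y ∈ A ∩ B`, `α, β ∈ (0,1)`,
and `z*` a fixed point of `T_{A,B,α,β}`: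
`T_{A,B,α,β}(x) = T_{A−y,B−y,α,β}(x − z*) + z*` for all `x`, and
`Fix T_{A,B,α,β} = z* + Fix T_{A−y,B−y,α,β}`. -/
theorem stmt_13 {H : Type*} [NormedAddCommGroup H] [InnerProductSpace ℝ H] [CompleteSpace H]
    (A B : Set H)
    (MA MB : Submodule ℝ H) (hMA : IsClosed (MA : Set H)) (hMB : IsClosed (MB : Set H))
    (a b : H) (hA : A = {a} + (MA : Set H)) (hB : B = {b} + (MB : Set H))
    (y : H) (hy : y ∈ A ∩ B)
    (α β : ℝ) (hα : α ∈ Set.Ioo (0 : ℝ) 1) (hβ : β ∈ Set.Ioo (0 : ℝ) 1)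
    (PA PB PAy PBy : H → H)
    (hPA : ∀ x, PA x ∈ A ∧ ∀ c ∈ A, ‖x - PA x‖ ≤ ‖x - c‖)
    (hPB : ∀ x, PB x ∈ B ∧ ∀ c ∈ B, ‖x - PB x‖ ≤ ‖x - c‖)
    (hPAy : ∀ x, PAy x ∈ A - {y} ∧ ∀ c ∈ A - {y}, ‖x - PAy x‖ ≤ ‖x - c‖)
    (hPBy : ∀ x, PBy x ∈ B - {y} ∧ ∀ c ∈ B - {y}, ‖x - PBy x‖ ≤ ‖x - c‖)
    (T Ty : H → H)
    (hT : ∀ x, T x =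
      (1 - α) • x + α • ((2 * β) • PB ((2 * β) • PA x - x) - ((2 * β) • PA x - x)))
    (hTy : ∀ x, Ty x =
      (1 - α) • x + α • ((2 * β) • PBy ((2 * β) • PAy x - x) - ((2 * β) • PAy x - x)))
    (zs : H) (hzs : T zs = zs) :
    (∀ x, T x = Ty (x - zs) + zs) ∧
    {x | T x = x} = (fun s => zs + s) '' {x | Ty x = x} :=
  stmt_13_general A B MA MB hMA hMB a b hA hB y hy α β PA PB PAy PBy hPA hPB hPAy hPBy T Ty hT hTy
    zs hzs
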